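/- If p = q = 1/2, then lim_{s→0+} √(2s)·Ĝ(y,s) = 2y + 1/β; equivalently Ĝ(y,s) ~ (2y + 1/β)/√(2s) as s → 0+. -/

import Mathlib

/-!
For `p = q = 1/2` one has `ξ₊(s) = 1 + √s (√s + √(s+2))`, so `ξ₊(s) - 1 ~ √(2s)`. Summing the
geometric series `∑_{k<y} ξ^k` removes the cancellation in `1 - β ξ^{-y}/(q(ξ-1) + β)`: it equals
`(ξ - 1) F(ξ)` with `F = ghatCofactor q β y` continuous at `1` and `F(1) = (q + βy)/β`. Hence
`√(2s) Ĝ(y,s) = √2 (√s + √(s+2)) F(ξ₊(s)) → 2 (1/2 + βy)/β = 2y + 1/β`.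
-/
open Filter Topology
noncomputable section

/-- `ξ₊(s)`, the solution of `ε(ξ) = s` with the positive square root, where
`ε(ξ) = pξ⁻¹ + qξ - 1`. -/
def xiPlus (p q s : ℝ) : ℝ := (s + 1 + Real.sqrt ((s + 1) ^ 2 - 4 * p * q)) / (2 * q)

/-- The Laplace transform `Ĝ(y,s) = (1/s)[1 - β ξ₊(s)^{-y}/(q(ξ₊(s)-1) + β)]` of the
probability that, in ASEP on `ℤ⁺` with ejection rate `β` at the boundary and no injection,
a single particle started at `y` has not yet been ejected at time `t`. -/
def Ghat (p q β : ℝ) (y : ℕ) (s : ℝ) : ℝ :=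
  (1 / s) * (1 - β * xiPlus p q s ^ (-(y : ℤ)) / (q * (xiPlus p q s - 1) + β))

theorem one_sub_mul_zpow_neg_div_eq {K : Type*} [Field K] (q β t : K) (y : ℕ) (ht : t ≠ 0)
    (hD : q * (t - 1) + β ≠ 0) :
    1 - β * t ^ (-(y : ℤ)) / (q * (t - 1) + β) =
      (t - 1) * ((q * t ^ y + β * ∑ k ∈ Finset.range y, t ^ k) / (t ^ y * (q * (t - 1) + β))) := by
  have hgeom := geom_sum_mul t y
  rw [zpow_neg, zpow_natCast]
  field_simp
  linear_combination (-β) * hgeom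

def ghatCofactor (q β : ℝ) (y : ℕ) (t : ℝ) : ℝ :=
  (q * t ^ y + β * ∑ k ∈ Finset.range y, t ^ k) / (t ^ y * (q * (t - 1) + β))

theorem Ghat_eq_mul_ghatCofactor (p q β : ℝ) (y : ℕ) (s : ℝ) (hξ : xiPlus p q s ≠ 0)
    (hD : q * (xiPlus p q s - 1) + β ≠ 0) :
    Ghat p q β y s = (xiPlus p q s - 1) / s * ghatCofactor q β y (xiPlus p q s) := by
  rw [Ghat, one_sub_mul_zpow_neg_div_eq q β _ y hξ hD, ghatCofactor]
  ring

theorem continuous_xiPlus (p q : ℝ) : Continuous (xiPlus p q) := by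
  unfold xiPlus; fun_prop

theorem xiPlus_half_half {s : ℝ} (hs : 0 ≤ s) :
    xiPlus (1/2) (1/2) s = 1 + √s * (√s + √(s + 2)) := by
  rw [xiPlus, show (s + 1) ^ 2 - 4 * (1/2 : ℝ) * (1/2) = s * (s + 2) by ring,
    Real.sqrt_mul hs, mul_add, Real.mul_self_sqrt hs]
  ring

theorem continuousAt_ghatCofactor_one (q : ℝ) {β : ℝ} (hβ : β ≠ 0) (y : ℕ) :
    ContinuousAt (ghatCofactor q β y) 1 := by
  unfold ghatCofactor
  exact ContinuousAt.div (by fun_prop) (by fun_prop) (by simpa using hβ)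

theorem ghatCofactor_one (q β : ℝ) (y : ℕ) : ghatCofactor q β y 1 = (q + β * y) / β := by
  simp [ghatCofactor]

theorem sqrt_two_mul_mul_Ghat_half_half {β s : ℝ} (hβ : 0 < β) (hs : 0 < s) (y : ℕ) :
    √(2 * s) * Ghat (1/2) (1/2) β y s =
      √2 * (√s + √(s + 2)) * ghatCofactor (1/2) β y (xiPlus (1/2) (1/2) s) := by
  have hξ : xiPlus (1/2) (1/2) s = 1 + √s * (√s + √(s + 2)) := xiPlus_half_half hs.le
  have hξ1 : 0 ≤ xiPlus (1/2) (1/2) s - 1 := by rw [hξ, add_sub_cancel_left]; positivity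
  rw [Ghat_eq_mul_ghatCofactor _ _ _ _ _ (by linarith) (by linarith), Real.sqrt_mul zero_le_two,
    hξ, add_sub_cancel_left]
  field_simp
  rw [Real.sq_sqrt hs.le]

/-- Tracy–Widom, survival of a single particle in open SSEP (`p = q = 1/2`) with ejection
only: `Ĝ(y,s) ~ (2y + 1/β)/√(2s)` as `s → 0⁺`, i.e.
`lim_{s→0⁺} √(2s) Ĝ(y,s) = 2y + 1/β`. -/
theorem survival_asymptotics_p_eq_q
    (p q β : ℝ) (hp : p = 1/2) (hq : q = 1/2) (hβ : 0 < β) (y : ℕ) :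
    Tendsto (fun s => Real.sqrt (2 * s) * Ghat p q β y s) (𝓝[>] (0:ℝ))
      (𝓝 (2 * y + 1 / β)) := by
  subst hp hq
  have hprefactor : Tendsto (fun s : ℝ => √2 * (√s + √(s + 2))) (𝓝[>] 0) (𝓝 2) := by
    have h : Continuous (fun s : ℝ => √2 * (√s + √(s + 2))) := by fun_prop
    simpa using (h.tendsto 0).mono_left nhdsWithin_le_nhds
  have hξ : Tendsto (xiPlus (1/2) (1/2)) (𝓝[>] 0) (𝓝 1) := by
    have h := ((continuous_xiPlus (1/2) (1/2)).tendsto 0).mono_left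
      (nhdsWithin_le_nhds (s := Set.Ioi 0))
    rwa [xiPlus_half_half le_rfl, Real.sqrt_zero, zero_mul, add_zero] at h
  have hcofactor := (continuousAt_ghatCofactor_one (1/2) hβ.ne' y).tendsto.comp hξ
  rw [ghatCofactor_one] at hcofactor
  convert (hprefactor.mul hcofactor).congr' ?_ using 2
  · field_simp
    ring
  · filter_upwards [self_mem_nhdsWithin] with s hs
    exact (sqrt_two_mul_mul_Ghat_half_half hβ hs y).symm
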